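/- A (2-)permutation of [n] is separable if and only if it avoids the patterns 2413 and 3142. -/

import Mathlib

/-- `P` is a `d`-permutation: a sequence of `d` permutations of `[n]`
whose first entry is the identity. -/
def IsDPerm {d n : ℕ} (P : Fin d → Equiv.Perm (Fin n)) : Prop :=
  ∀ h : 0 < d, P ⟨0, h⟩ = 1

/-- Separability of the restriction of the `d` rows `P` to the block of
columns `[a, b)`: either the block consists of a single column, or it can be
split into two consecutive sub-blocks such that in each row all entries of one
sub-block are smaller than all entries of the other, and both sub-blocks are
themselves separable. -/
inductive SepOn {d : ℕ} (P : Fin d → ℕ → ℕ) : ℕ → ℕ → Prop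
  | single (a : ℕ) : SepOn P a (a + 1)
  | split (a l b : ℕ) (h1 : a < l) (h2 : l < b)
      (hmono : ∀ i : Fin d,
        (∀ j1 j2, a ≤ j1 → j1 < l → l ≤ j2 → j2 < b → P i j1 < P i j2) ∨
        (∀ j1 j2, a ≤ j1 → j1 < l → l ≤ j2 → j2 < b → P i j2 < P i j1))
      (hL : SepOn P a l) (hR : SepOn P l b) : SepOn P a b

/-- The rows of a `d`-permutation, as functions `ℕ → ℕ`. -/
def dPermRows {d n : ℕ} (P : Fin d → Equiv.Perm (Fin n)) : Fin d → ℕ → ℕ :=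
  fun i j => if h : j < n then (P i ⟨j, h⟩ : ℕ) else 0

/-- A `d`-permutation of `[n]` is separable if its full block of columns is
recursively separable. -/
def IsSepDPerm {d n : ℕ} (P : Fin d → Equiv.Perm (Fin n)) : Prop :=
  SepOn (dPermRows P) 0 n


/-- `π` contains the pattern `σ` (a permutation of `{0,1,2,3}`, given as a
function): there are four positions, in increasing order, on which the values
of `π` are in the same relative order as the values of `σ`. -/
def ContainsPat {n : ℕ} (π : Equiv.Perm (Fin n)) (σ : Fin 4 → Fin 4) : Prop :=
  ∃ c : Fin 4 → Fin n, StrictMono c ∧ ∀ j k : Fin 4, σ j < σ k ↔ π (c j) < π (c k)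

/-!
A 2413 or 3142 admits no sum or skew split, so an occurrence inside a split block lies in one
of the two halves; hence separable permutations avoid both patterns.

Conversely, it suffices that every pattern-free block of length at least two has a sum or a skew
split. Induct on the right end: up to order duality `[a, b)` has a sum split `[a, l) < [l, b)`.
Let `v` be the value at `b`. If `[a, l)` lies below `v`, split at `l`. Otherwise let `m` be the
first position of `[a, l)` with value above `v`. A later position `j < l` with value below `v`
gives a 3142 at `m, j, l, b`. If there is none, split at `m` when `a < m`, and at `b` (skew)
when `m = a`.
-/

open OrderDual

section Blocks

variable {α : Type*} [LinearOrder α] {f : ℕ → α} {a l b : ℕ}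

def IsSumSplit (f : ℕ → α) (a l b : ℕ) : Prop :=
  ∀ i j, a ≤ i → i < l → l ≤ j → j < b → f i < f j

def IsSkewSplit (f : ℕ → α) (a l b : ℕ) : Prop :=
  ∀ i j, a ≤ i → i < l → l ≤ j → j < b → f j < f i

def IsSplit (f : ℕ → α) (a l b : ℕ) : Prop :=
  IsSumSplit f a l b ∨ IsSkewSplit f a l b

theorem isSumSplit_toDual : IsSumSplit (toDual ∘ f) a l b ↔ IsSkewSplit f a l b :=
  Iff.rfl

theorem isSplit_toDual : IsSplit (toDual ∘ f) a l b ↔ IsSplit f a l b :=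
  Or.comm

def Contains2413 (f : ℕ → α) (a b : ℕ) : Prop :=
  ∃ c₀ c₁ c₂ c₃, a ≤ c₀ ∧ c₀ < c₁ ∧ c₁ < c₂ ∧ c₂ < c₃ ∧ c₃ < b ∧
    f c₂ < f c₀ ∧ f c₀ < f c₃ ∧ f c₃ < f c₁

def Contains3142 (f : ℕ → α) (a b : ℕ) : Prop :=
  ∃ c₀ c₁ c₂ c₃, a ≤ c₀ ∧ c₀ < c₁ ∧ c₁ < c₂ ∧ c₂ < c₃ ∧ c₃ < b ∧
    f c₁ < f c₃ ∧ f c₃ < f c₀ ∧ f c₀ < f c₂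

theorem contains2413_toDual : Contains2413 (toDual ∘ f) a b ↔ Contains3142 f a b :=
  exists₄_congr fun _ _ _ _ => by simp only [Function.comp_apply, toDual_lt_toDual]; tauto

theorem contains3142_toDual : Contains3142 (toDual ∘ f) a b ↔ Contains2413 f a b :=
  exists₄_congr fun _ _ _ _ => by simp only [Function.comp_apply, toDual_lt_toDual]; tauto

theorem Contains2413.mono {a' b' : ℕ} (h : Contains2413 f a' b') (ha : a ≤ a') (hb : b' ≤ b) :
    Contains2413 f a b := by
  obtain ⟨c₀, c₁, c₂, c₃, h₀, h₁, h₂, h₃, h₄, hv⟩ := h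
  exact ⟨c₀, c₁, c₂, c₃, by omega, h₁, h₂, h₃, by omega, hv⟩

theorem Contains3142.mono {a' b' : ℕ} (h : Contains3142 f a' b') (ha : a ≤ a') (hb : b' ≤ b) :
    Contains3142 f a b := by
  obtain ⟨c₀, c₁, c₂, c₃, h₀, h₁, h₂, h₃, h₄, hv⟩ := h
  exact ⟨c₀, c₁, c₂, c₃, by omega, h₁, h₂, h₃, by omega, hv⟩

theorem Contains2413.left_or_right (h : Contains2413 f a b) (hl : IsSplit f a l b) :
    Contains2413 f a l ∨ Contains2413 f l b := by
  obtain ⟨c₀, c₁, c₂, c₃, h₀, h₁, h₂, h₃, h₄, h₂₀, h₀₃, h₃₁⟩ := h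
  by_cases hc₃ : c₃ < l
  · exact .inl ⟨c₀, c₁, c₂, c₃, h₀, h₁, h₂, h₃, hc₃, h₂₀, h₀₃, h₃₁⟩
  by_cases hc₀ : l ≤ c₀
  · exact .inr ⟨c₀, c₁, c₂, c₃, hc₀, h₁, h₂, h₃, h₄, h₂₀, h₀₃, h₃₁⟩
  exfalso
  rcases hl with hs | hs
  · by_cases hc₁ : c₁ < l
    · exact lt_asymm h₃₁ (hs c₁ c₃ (by omega) hc₁ (by omega) h₄)
    · exact lt_asymm h₂₀ (hs c₀ c₂ h₀ (by omega) (by omega) (by omega))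
  · exact lt_asymm h₀₃ (hs c₀ c₃ h₀ (by omega) (by omega) h₄)

theorem Contains3142.left_or_right (h : Contains3142 f a b) (hl : IsSplit f a l b) :
    Contains3142 f a l ∨ Contains3142 f l b := by
  simpa only [contains2413_toDual] using
    (contains2413_toDual.2 h).left_or_right (isSplit_toDual.2 hl)

theorem exists_isSplit_succ_of_isSumSplit (hf : Set.InjOn f (Set.Ico a (b + 1)))
    (hal : a < l) (hlb : l < b) (hs : IsSumSplit f a l b) (h3142 : ¬ Contains3142 f a (b + 1)) :
    ∃ m, a < m ∧ m < b + 1 ∧ IsSplit f a m (b + 1) := by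
  classical
  have hne : ∀ i, a ≤ i → i < b → f i ≠ f b := fun i hai hib h =>
    hib.ne (hf ⟨hai, by omega⟩ ⟨by omega, by omega⟩ h)
  by_cases hlow : ∀ i, a ≤ i → i < l → f i < f b
  · refine ⟨l, hal, by omega, .inl fun i j hai hil hlj hjb => ?_⟩
    rcases Nat.lt_succ_iff_lt_or_eq.1 hjb with hjb | rfl
    · exact hs i j hai hil hlj hjb
    · exact hlow i hai hil
  push Not at hlow
  have hm := Nat.find_spec hlow
  set m := Nat.find hlow
  have hvm : f b < f m := (hne m hm.1 (by omega)).symm.lt_of_le hm.2.2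
  have hbelow : ∀ i, a ≤ i → i < m → f i < f b := fun i hai him =>
    not_le.1 fun h => Nat.find_min hlow him ⟨hai, by omega, h⟩
  have habove : ∀ j, m ≤ j → j < l → f b < f j := by
    intro j hmj hjl
    refine (hne j (by omega) (by omega)).symm.lt_of_le (not_lt.1 fun hjb => h3142 ?_)
    have hmj : m < j := hmj.lt_of_ne (by rintro rfl; exact lt_asymm hjb hvm)
    exact ⟨m, j, l, b, hm.1, hmj, hjl, hlb, by omega, hjb, hvm, hs m l hm.1 hm.2.1 le_rfl hlb⟩
  rcases hm.1.eq_or_lt with ham | ham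
  · refine ⟨b, by omega, by omega, .inr fun i j hai hib hbj hjb => ?_⟩
    obtain rfl : j = b := by omega
    rcases lt_or_ge i l with hil | hli
    · exact habove i (by omega) hil
    · exact (habove a (by omega) hal).trans (hs a i le_rfl hal hli hib)
  · refine ⟨m, ham, by omega, .inl fun i j hai him hmj hjb => ?_⟩
    rcases lt_or_ge j l with hjl | hlj
    · exact (hbelow i hai him).trans (habove j hmj hjl)
    rcases Nat.lt_succ_iff_lt_or_eq.1 hjb with hjb | rfl
    · exact hs i j hai (by omega) hlj hjb
    · exact hbelow i hai him

theorem exists_isSplit_of_not_contains (hf : Set.InjOn f (Set.Ico a b)) (hab : a + 1 < b)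
    (h2413 : ¬ Contains2413 f a b) (h3142 : ¬ Contains3142 f a b) :
    ∃ l, a < l ∧ l < b ∧ IsSplit f a l b := by
  induction b, hab using Nat.le_induction generalizing f with
  | base =>
    refine ⟨a + 1, by omega, by omega, ?_⟩
    rcases lt_or_gt_of_ne (hf.ne (x := a) (y := a + 1) ⟨le_rfl, by omega⟩ ⟨by omega, by omega⟩
      (by omega)) with h | h
    · exact .inl fun i j _ _ _ _ => by rwa [show i = a by omega, show j = a + 1 by omega]
    · exact .inr fun i j _ _ _ _ => by rwa [show i = a by omega, show j = a + 1 by omega]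
  | succ b hab ih =>
    have hf' := hf.mono (Set.Ico_subset_Ico_right b.le_succ)
    obtain ⟨l, hal, hlb, hs | hs⟩ := ih hf' (fun h => h2413 (h.mono le_rfl b.le_succ))
      (fun h => h3142 (h.mono le_rfl b.le_succ))
    · exact exists_isSplit_succ_of_isSumSplit hf hal hlb hs h3142
    · obtain ⟨m, ham, hmb, hm⟩ := exists_isSplit_succ_of_isSumSplit
        (toDual.injective.comp_injOn hf) hal hlb (isSumSplit_toDual.2 hs)
        (contains3142_toDual.not.2 h2413)
      exact ⟨m, ham, hmb, isSplit_toDual.1 hm⟩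

theorem contains2413_iff : Contains2413 f a b ↔ ∃ c : Fin 4 → ℕ, StrictMono c ∧ a ≤ c 0 ∧
    c 3 < b ∧ ∀ j k, (![1, 3, 0, 2] : Fin 4 → Fin 4) j < ![1, 3, 0, 2] k → f (c j) < f (c k) := by
  constructor
  · rintro ⟨c₀, c₁, c₂, c₃, h₀, h₀₁, h₁₂, h₂₃, h₃, h₂₀, h₀₃, h₃₁⟩
    refine ⟨![c₀, c₁, c₂, c₃], by simp [h₀₁, h₁₂, h₂₃], h₀, h₃, ?_⟩
    intro j k hjk
    fin_cases j <;> fin_cases k <;> simp at hjk ⊢ <;> order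
  · rintro ⟨c, hc, h₀, h₃, h⟩
    exact ⟨c 0, c 1, c 2, c 3, h₀, hc (by decide), hc (by decide), hc (by decide), h₃,
      h 2 0 (by decide), h 0 3 (by decide), h 3 1 (by decide)⟩

theorem contains3142_iff : Contains3142 f a b ↔ ∃ c : Fin 4 → ℕ, StrictMono c ∧ a ≤ c 0 ∧
    c 3 < b ∧ ∀ j k, (![2, 0, 3, 1] : Fin 4 → Fin 4) j < ![2, 0, 3, 1] k → f (c j) < f (c k) := by
  constructor
  · rintro ⟨c₀, c₁, c₂, c₃, h₀, h₀₁, h₁₂, h₂₃, h₃, h₁₃, h₃₀, h₀₂⟩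
    refine ⟨![c₀, c₁, c₂, c₃], by simp [h₀₁, h₁₂, h₂₃], h₀, h₃, ?_⟩
    intro j k hjk
    fin_cases j <;> fin_cases k <;> simp at hjk ⊢ <;> order
  · rintro ⟨c, hc, h₀, h₃, h⟩
    exact ⟨c 0, c 1, c 2, c 3, h₀, hc (by decide), hc (by decide), hc (by decide), h₃,
      h 1 3 (by decide), h 3 0 (by decide), h 0 2 (by decide)⟩

end Blocks

section SepOn

variable {d : ℕ} {P : Fin d → ℕ → ℕ} {a b : ℕ}

theorem SepOn.not_contains (h : SepOn P a b) (i : Fin d) :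
    ¬ Contains2413 (P i) a b ∧ ¬ Contains3142 (P i) a b := by
  induction h with
  | single a =>
    constructor <;> rintro ⟨c₀, c₁, c₂, c₃, h₀, h₁, h₂, h₃, h₄, -⟩ <;> omega
  | split a l b _ _ hmono _ _ ihL ihR =>
    exact ⟨fun h => (h.left_or_right (hmono i)).elim ihL.1 ihR.1,
      fun h => (h.left_or_right (hmono i)).elim ihL.2 ihR.2⟩

theorem sepOn_of_forall_exists_split (hab : a < b)
    (h : ∀ a' b', a ≤ a' → b' ≤ b → a' + 1 < b' →
      ∃ l, a' < l ∧ l < b' ∧ ∀ i, IsSplit (P i) a' l b') :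
    SepOn P a b := by
  induction hk : b - a using Nat.strong_induction_on generalizing a b with
  | _ k ih =>
    rcases (Nat.succ_le_of_lt hab).eq_or_lt with rfl | hab
    · exact .single a
    obtain ⟨l, hal, hlb, hl⟩ := h a b le_rfl le_rfl hab
    exact .split a l b hal hlb hl
      (ih (l - a) (by omega) hal (fun a' b' ha hb => h a' b' ha (by omega)) rfl)
      (ih (b - l) (by omega) hlb (fun a' b' ha hb => h a' b' (by omega) hb) rfl)

end SepOn

theorem dPermRows_of_lt {d n : ℕ} (P : Fin d → Equiv.Perm (Fin n)) (i : Fin d) {j : ℕ}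
    (hj : j < n) : dPermRows P i j = P i ⟨j, hj⟩ :=
  dif_pos hj

theorem containsPat_iff_exists_nat {d n : ℕ} (P : Fin d → Equiv.Perm (Fin n)) (i : Fin d)
    {σ : Fin 4 → Fin 4} (hσ : σ.Injective) :
    ContainsPat (P i) σ ↔ ∃ c : Fin 4 → ℕ, StrictMono c ∧ 0 ≤ c 0 ∧ c 3 < n ∧
      ∀ j k, σ j < σ k → dPermRows P i (c j) < dPermRows P i (c k) := by
  have hiff {g : Fin 4 → Fin n} (hg : ∀ j k, σ j < σ k → g j < g k) (j k : Fin 4) :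
      σ j < σ k ↔ g j < g k := by
    refine ⟨hg j k, fun hlt => lt_of_not_ge fun hkj => ?_⟩
    rcases hkj.lt_or_eq with hkj | hkj
    · exact lt_asymm hlt (hg k j hkj)
    · exact hlt.ne (by rw [hσ hkj])
  constructor
  · rintro ⟨c, hc, h⟩
    refine ⟨fun j => c j, Fin.val_strictMono.comp hc, Nat.zero_le _, (c 3).2, fun j k hjk => ?_⟩
    simpa only [dPermRows_of_lt _ _ (c _).2, Fin.eta, Fin.val_fin_lt] using (h j k).1 hjk
  · rintro ⟨c, hc, -, h₃, h⟩
    have hcn (j : Fin 4) : c j < n := (hc.monotone (Fin.le_last j)).trans_lt h₃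
    refine ⟨fun j => ⟨c j, hcn j⟩, fun j k hjk => hc hjk, hiff fun j k hjk => ?_⟩
    simpa only [dPermRows_of_lt _ _ (hcn _), Fin.val_fin_lt] using h j k hjk

theorem injOn_dPermRows {d n : ℕ} (P : Fin d → Equiv.Perm (Fin n)) (i : Fin d) :
    Set.InjOn (dPermRows P i) (Set.Iio n) := fun x hx y hy h => by
  rw [dPermRows_of_lt P i hx, dPermRows_of_lt P i hy] at h
  exact congrArg Fin.val ((P i).injective (Fin.ext h))

theorem isSumSplit_dPermRows_of_eq_one {d n : ℕ} {P : Fin d → Equiv.Perm (Fin n)} {i : Fin d}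
    (hP : P i = 1) {a l b : ℕ} (hb : b ≤ n) : IsSumSplit (dPermRows P i) a l b :=
  fun j k _ hjl hlk hkb => by
    rw [dPermRows_of_lt P i (show j < n by omega), dPermRows_of_lt P i (show k < n by omega), hP]
    exact (show j < k by omega)

/-- A permutation is separable iff it avoids the patterns `2413` and `3142`. -/
theorem sep_iff_avoids (n : ℕ) (hn : 1 ≤ n) (π : Equiv.Perm (Fin n)) :
    IsSepDPerm ![1, π] ↔
      ¬ ContainsPat π ![1, 3, 0, 2] ∧ ¬ ContainsPat π ![2, 0, 3, 1] := by
  have h2413 : ContainsPat π ![1, 3, 0, 2] ↔ Contains2413 (dPermRows ![1, π] 1) 0 n :=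
    (containsPat_iff_exists_nat ![1, π] 1 (by decide)).trans contains2413_iff.symm
  have h3142 : ContainsPat π ![2, 0, 3, 1] ↔ Contains3142 (dPermRows ![1, π] 1) 0 n :=
    (containsPat_iff_exists_nat ![1, π] 1 (by decide)).trans contains3142_iff.symm
  rw [h2413, h3142]
  refine ⟨fun hsep => hsep.not_contains 1, fun ⟨h24, h31⟩ => ?_⟩
  refine sepOn_of_forall_exists_split hn fun a b _ hb hab => ?_
  obtain ⟨l, hal, hlb, hl⟩ := exists_isSplit_of_not_contains
    ((injOn_dPermRows ![1, π] 1).mono fun j hj => hj.2.trans_le hb) hab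
    (fun h => h24 (h.mono (Nat.zero_le a) hb)) (fun h => h31 (h.mono (Nat.zero_le a) hb))
  exact ⟨l, hal, hlb, Fin.forall_fin_two.2 ⟨.inl (isSumSplit_dPermRows_of_eq_one rfl hb), hl⟩⟩
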